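/- arXiv:2311.00620 — 4 statements merged into one kernel-verified Lean document; each statement's English description precedes it below -/
import Mathlib

section
/- Let G be a finitely generated abelian group with a full archimedean bi-invariant partial order ≺. Then G contains a unique maximal antichain subgroup, i.e. there is exactly one subgroup H ≤ G such that H is an antichain and H is maximal among subgroups of G that are antichains. -/
/-- A bi-invariant partial order on a group `G`. -/
structure IsBIPO {G : Type*} [Group G] (r : G → G → Prop) : Prop where
  irrefl : ∀ g, ¬ r g g
  antisymm : ∀ g h, r g h → ¬ r h g
  trans : ∀ f g h, r f g → r g h → r f h
  mul_left : ∀ f g h, r f g → r (h * f) (h * g)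
  mul_right : ∀ f g h, r f g → r (f * h) (g * h)

/-- The positive cone of an order on a group. -/
def posCone {G : Type*} [Group G] (r : G → G → Prop) : Set G := {g | r 1 g}

/-- A homomorphism between ordered groups is order preserving. -/
def OrderPreservingHom {G Q : Type*} [Group G] [Group Q]
    (φ : G →* Q) (rG : G → G → Prop) (rQ : Q → Q → Prop) : Prop :=
  ∀ g h, rG g h → rQ (φ g) (φ h) ∨ φ g = φ h

/-- `S` is an antichain for `r`: no two elements of `S` are related. -/
def IsAntichainFor {G : Type*} (r : G → G → Prop) (S : Set G) : Prop :=
  ∀ s ∈ S, ∀ t ∈ S, ¬ r s t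

/-- `S` is a maximal antichain for `r`. -/
def IsMaxAntichainFor {G : Type*} (r : G → G → Prop) (S : Set G) : Prop :=
  IsAntichainFor r S ∧ ∀ T : Set G, IsAntichainFor r T → S ⊆ T → T = S

/-- `H` is a maximal antichain subgroup for `r`. -/
def IsMaxAntichainSubgroup {G : Type*} [Group G] (r : G → G → Prop) (H : Subgroup G) : Prop :=
  IsAntichainFor r (H : Set G) ∧
    ∀ K : Subgroup G, IsAntichainFor r (K : Set G) → H ≤ K → K = H

/-- The order is primitive. -/
def PrimitiveOrder {G : Type*} [Group G] (r : G → G → Prop) : Prop :=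
  ∀ g h : G, ∀ n : ℕ, 1 ≤ n → r (g ^ n) (h ^ n) → r g h

/-- The order is factorizing. -/
def FactorizingOrder {G : Type*} [Group G] (r : G → G → Prop) : Prop :=
  ∀ (H : Subgroup G) [H.Normal], IsAntichainFor r (H : Set G) →
    ∃ r' : (G ⧸ H) → (G ⧸ H) → Prop, IsBIPO r' ∧
      ∀ g h : G, r g h ↔ r' (g : G ⧸ H) (h : G ⧸ H)

/-- The order is full: primitive and factorizing. -/
def FullOrder {G : Type*} [Group G] (r : G → G → Prop) : Prop :=
  PrimitiveOrder r ∧ FactorizingOrder r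

/-- The order is archimedean: no positive infinitesimal elements. -/
def ArchimedeanOrderFor {G : Type*} [Group G] (r : G → G → Prop) : Prop :=
  ¬ ∃ g h : G, r 1 g ∧ ∀ i : ℤ, r (g ^ i) h

/-- The order is non-trivial. -/
def NontrivialOrder {G : Type*} (r : G → G → Prop) : Prop := ∃ g h, r g h

/-- A subset `K` of a group is coarsely connected. -/
def CoarselyConnected {G : Type*} [Group G] (K : Set G) : Prop :=
  ∃ (H : Subgroup G) (S : Finset G),
    K ⊆ (H : Set G) ∧ Subgroup.closure (S : Set G) = H ∧
    ∀ g ∈ K, ∀ h ∈ K, ∃ (n : ℕ) (c : ℕ → G),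
      c 0 = g ∧ c n = h ∧ (∀ i ≤ n, c i ∈ K) ∧
      ∀ i < n, (c i)⁻¹ * c (i + 1) ∈ (S : Set G) ∪ ((S : Set G))⁻¹

/-!
The elements incomparable to `1` form a subgroup. Primitivity makes the cyclic subgroup generated
by such a `g` an antichain, so factorizing lets the order descend to `G ⧸ ⟨g⟩`, where `g * h` and
`h` coincide; hence `g * h` is incomparable to `1` whenever `h` is. By invariance a subgroup is an
antichain exactly when all its elements are incomparable to `1`, so this subgroup is the greatest
antichain subgroup.
-/

namespace IsBIPO

variable {G : Type*} [Group G] {r : G → G → Prop}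

theorem rel_one_inv_iff (hr : IsBIPO r) {g : G} : r 1 g⁻¹ ↔ r g 1 := by
  constructor
  · intro h
    simpa using hr.mul_left _ _ g h
  · intro h
    simpa using hr.mul_left _ _ g⁻¹ h

theorem isAntichainFor_subgroup_iff (hr : IsBIPO r) {K : Subgroup G} :
    IsAntichainFor r (K : Set G) ↔ ∀ x ∈ K, ¬ r 1 x := by
  constructor
  · intro hK x hx
    exact hK 1 K.one_mem x hx
  · intro hK s hs t ht hst
    exact hK (s⁻¹ * t) (K.mul_mem (K.inv_mem hs) ht) (by simpa using hr.mul_left _ _ s⁻¹ hst)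

def incomparables (r : G → G → Prop) : Set G := {g | ¬ r 1 g ∧ ¬ r g 1}

theorem inv_mem_incomparables (hr : IsBIPO r) {g : G} (hg : g ∈ incomparables r) :
    g⁻¹ ∈ incomparables r :=
  ⟨fun h => hg.2 (hr.rel_one_inv_iff.1 h),
    fun h => hg.1 (by simpa using hr.rel_one_inv_iff (g := g⁻¹) |>.2 h)⟩

theorem subset_incomparables_of_isAntichainFor {K : Subgroup G}
    (hK : IsAntichainFor r (K : Set G)) :
    (K : Set G) ⊆ incomparables r :=
  fun x hx => ⟨hK 1 K.one_mem x hx, hK x hx 1 K.one_mem⟩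

end IsBIPO

namespace PrimitiveOrder

variable {G : Type*} [Group G] {r : G → G → Prop}

theorem not_rel_one_pow (hr : IsBIPO r) (hp : PrimitiveOrder r) {g : G} (hg : ¬ r 1 g) :
    ∀ n : ℕ, ¬ r 1 (g ^ n)
  | 0 => by simpa using hr.irrefl 1
  | n + 1 => fun h => hg (hp 1 g (n + 1) n.succ_pos (by rwa [one_pow]))

theorem not_rel_pow_one (hr : IsBIPO r) (hp : PrimitiveOrder r) {g : G} (hg : ¬ r g 1) :
    ∀ n : ℕ, ¬ r (g ^ n) 1
  | 0 => by simpa using hr.irrefl 1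
  | n + 1 => fun h => hg (hp g 1 (n + 1) n.succ_pos (by rwa [one_pow]))

theorem not_rel_one_zpow (hr : IsBIPO r) (hp : PrimitiveOrder r) {g : G}
    (hg : g ∈ IsBIPO.incomparables r) : ∀ n : ℤ, ¬ r 1 (g ^ n)
  | .ofNat n => by simpa using hp.not_rel_one_pow hr hg.1 n
  | .negSucc n => by
    rw [zpow_negSucc, hr.rel_one_inv_iff]
    exact hp.not_rel_pow_one hr hg.2 (n + 1)

theorem isAntichainFor_zpowers (hr : IsBIPO r) (hp : PrimitiveOrder r) {g : G}
    (hg : g ∈ IsBIPO.incomparables r) : IsAntichainFor r (Subgroup.zpowers g : Set G) := by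
  rw [hr.isAntichainFor_subgroup_iff]
  rintro _ ⟨n, rfl⟩
  exact hp.not_rel_one_zpow hr hg n

end PrimitiveOrder

theorem FactorizingOrder.rel_mul_mul_iff {G : Type*} [Group G] {r : G → G → Prop}
    (hf : FactorizingOrder r) {N : Subgroup G} [N.Normal] (hN : IsAntichainFor r (N : Set G))
    {x y : G} (hx : x ∈ N) (hy : y ∈ N) (g h : G) : r (x * g) (y * h) ↔ r g h := by
  obtain ⟨r', -, hr'⟩ := hf N hN
  rw [hr', hr' g h, QuotientGroup.mk_mul, QuotientGroup.mk_mul,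
    (QuotientGroup.eq_one_iff x).2 hx, (QuotientGroup.eq_one_iff y).2 hy, one_mul, one_mul]

theorem existsUnique_isMaxAntichainSubgroup_of_isGreatest {G : Type*} [Group G]
    {r : G → G → Prop} {H : Subgroup G}
    (hH : IsGreatest {K : Subgroup G | IsAntichainFor r (K : Set G)} H) :
    ∃! K : Subgroup G, IsMaxAntichainSubgroup r K :=
  ⟨H, ⟨hH.1, fun _ hK hHK => le_antisymm (hH.2 hK) hHK⟩,
    fun _ hK => (hK.2 H hH.1 (hH.2 hK.1)).symm⟩

section Comm

variable {G : Type*} [CommGroup G] {r : G → G → Prop}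

theorem IsBIPO.mul_mem_incomparables (hr : IsBIPO r) (hfull : FullOrder r) {g h : G}
    (hg : g ∈ incomparables r) (hh : h ∈ incomparables r) : g * h ∈ incomparables r := by
  have hgN := hfull.1.isAntichainFor_zpowers hr hg
  have hg1 := Subgroup.mem_zpowers g
  have h1 := Subgroup.one_mem (Subgroup.zpowers g)
  exact ⟨fun h' => hh.1 ((hfull.2.rel_mul_mul_iff hgN h1 hg1 1 h).1 (by simpa using h')),
    fun h' => hh.2 ((hfull.2.rel_mul_mul_iff hgN hg1 h1 h 1).1 (by simpa using h'))⟩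

def IsBIPO.incomparablesSubgroup (hr : IsBIPO r) (hfull : FullOrder r) : Subgroup G where
  carrier := incomparables r
  one_mem' := ⟨hr.irrefl 1, hr.irrefl 1⟩
  mul_mem' := hr.mul_mem_incomparables hfull
  inv_mem' := hr.inv_mem_incomparables

theorem IsBIPO.isGreatest_incomparablesSubgroup (hr : IsBIPO r) (hfull : FullOrder r) :
    IsGreatest {K : Subgroup G | IsAntichainFor r (K : Set G)} (hr.incomparablesSubgroup hfull) :=
  ⟨hr.isAntichainFor_subgroup_iff.2 fun _ hx => hx.1,
    fun _ hK => IsBIPO.subset_incomparables_of_isAntichainFor hK⟩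

end Comm

theorem unique_max_antichain_subgroup_abelian_general {G : Type*} [CommGroup G]
    (r : G → G → Prop) (hr : IsBIPO r) (hfull : FullOrder r) :
    ∃! H : Subgroup G, IsMaxAntichainSubgroup r H :=
  existsUnique_isMaxAntichainSubgroup_of_isGreatest (hr.isGreatest_incomparablesSubgroup hfull)

/-- A finitely generated abelian group with a full archimedean bi-invariant partial order
contains a unique maximal antichain subgroup. -/
theorem unique_max_antichain_subgroup_abelian {G : Type*} [CommGroup G] [Group.FG G]
    (r : G → G → Prop) (hr : IsBIPO r) (hfull : FullOrder r) (harch : ArchimedeanOrderFor r) :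
    ∃! H : Subgroup G, IsMaxAntichainSubgroup r H :=
  unique_max_antichain_subgroup_abelian_general r hr hfull
end

section
/- Let G be a finitely generated abelian group with a full archimedean bi-invariant partial order ≺, and let H ≤ G be a maximal antichain subgroup of G. Then there exists a bi-invariant partial order ≺' on the quotient G/H that is total (any two distinct elements comparable) and satisfies g ≺ h iff gH ≺' hH for all g, h ∈ G; moreover, there exists a group homomorphism Φ : G → ℝ such that for all g, h ∈ G, g ≺ h iff Φ(g) < Φ(h). -/
/-! By factorization, `≺` descends to a bi-invariant order `≺'` on `G/H`. It is total: if `gH` and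
`hH` were incomparable, then `c = g⁻¹h` would be incomparable with `1`, and by primitivity so would
every power of `c`; the preimage of `⟨cH⟩` would then be an antichain subgroup strictly larger
than `H`. A total archimedean bi-invariant order on an abelian group embeds into `(ℝ, +)` by
Hölder's theorem, and `Φ` is this embedding composed with `G → G/H`. -/

namespace IsBIPO

variable {G : Type*} [Group G] {r : G → G → Prop}

theorem lt_iff_one_lt_inv_mul (hr : IsBIPO r) (g h : G) : r g h ↔ r 1 (g⁻¹ * h) :=
  ⟨fun hgh => by simpa using hr.mul_left g h g⁻¹ hgh,
    fun h1 => by simpa using hr.mul_left 1 (g⁻¹ * h) g h1⟩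

theorem isStrictTotalOrder (hr : IsBIPO r) (htot : ∀ a b : G, a ≠ b → r a b ∨ r b a) :
    IsStrictTotalOrder G r where
  trichotomous a b hab hba := by_contra fun hne => (htot a b hne).elim hab hba
  irrefl := hr.irrefl
  trans := hr.trans

end IsBIPO

theorem PrimitiveOrder.one_lt_or_one_lt_inv_of_one_lt_zpow {G : Type*} [Group G]
    {r : G → G → Prop} (hr : IsBIPO r) (hp : PrimitiveOrder r) {c : G} {k : ℤ}
    (hk : r 1 (c ^ k)) : r 1 c ∨ r 1 c⁻¹ := by
  obtain ⟨n, rfl | rfl⟩ := k.eq_nat_or_neg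
  all_goals rcases n.eq_zero_or_pos with rfl | hn
  all_goals try exact absurd hk (by simpa using hr.irrefl 1)
  · exact Or.inl (hp 1 c n hn (by simpa using hk))
  · exact Or.inr (hp 1 c⁻¹ n hn (by simpa [zpow_neg, inv_pow] using hk))

theorem ArchimedeanOrderFor.of_surjective {G Q : Type*} [Group G] [Group Q]
    {r : G → G → Prop} {r' : Q → Q → Prop} (harch : ArchimedeanOrderFor r) (f : G →* Q)
    (hf : Function.Surjective f) (hrr' : ∀ g h, r g h ↔ r' (f g) (f h)) :
    ArchimedeanOrderFor r' := by
  rintro ⟨a, b, ha, hab⟩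
  obtain ⟨g, rfl⟩ := hf a
  obtain ⟨h, rfl⟩ := hf b
  refine harch ⟨g, h, (hrr' 1 g).2 (by simpa using ha), fun i => (hrr' _ h).2 ?_⟩
  simpa using hab i

section MaxAntichainSubgroup

variable {G : Type*} [Group G] {r : G → G → Prop} {H : Subgroup G} [H.Normal]
  {r' : G ⧸ H → G ⧸ H → Prop}

theorem isAntichainFor_comap_zpowers (hr : IsBIPO r) (hp : PrimitiveOrder r)
    (hrr' : ∀ g h : G, r g h ↔ r' g h) {c : G} (hc : ¬ r 1 c) (hc' : ¬ r 1 c⁻¹) :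
    IsAntichainFor r ((Subgroup.zpowers (c : G ⧸ H)).comap (QuotientGroup.mk' H)) := by
  intro s hs t ht hst
  obtain ⟨m, hm⟩ := Subgroup.mem_zpowers_iff.1 hs
  obtain ⟨n, hn⟩ := Subgroup.mem_zpowers_iff.1 ht
  have hmn : r (c ^ m) (c ^ n) := by
    rw [hrr', QuotientGroup.mk_zpow, QuotientGroup.mk_zpow]
    simpa [hm, hn] using (hrr' s t).1 hst
  have hpos : r 1 (c ^ (-m + n)) := by
    rwa [hr.lt_iff_one_lt_inv_mul, ← zpow_neg, ← zpow_add] at hmn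
  exact (hp.one_lt_or_one_lt_inv_of_one_lt_zpow hr hpos).elim hc hc'

theorem IsMaxAntichainSubgroup.total_of_factor (hr : IsBIPO r) (hp : PrimitiveOrder r)
    (hH : IsMaxAntichainSubgroup r H) (hrr' : ∀ g h : G, r g h ↔ r' g h) :
    ∀ a b : G ⧸ H, a ≠ b → r' a b ∨ r' b a := by
  intro a b hab
  obtain ⟨g, rfl⟩ := QuotientGroup.mk_surjective a
  obtain ⟨h, rfl⟩ := QuotientGroup.mk_surjective b
  by_contra! hnot
  have hc : ¬ r 1 (g⁻¹ * h) := by rw [← hr.lt_iff_one_lt_inv_mul, hrr']; exact hnot.1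
  have hc' : ¬ r 1 (g⁻¹ * h)⁻¹ := by
    rw [mul_inv_rev, inv_inv, ← hr.lt_iff_one_lt_inv_mul, hrr']; exact hnot.2
  set K := (Subgroup.zpowers ((g⁻¹ * h : G) : G ⧸ H)).comap (QuotientGroup.mk' H)
  have hHK : H ≤ K := fun x hx => by
    simp [K, (QuotientGroup.eq_one_iff x).2 hx]
  have hKH : K = H := hH.2 K (isAntichainFor_comap_zpowers hr hp hrr' hc hc') hHK
  have hmem : g⁻¹ * h ∈ K := Subgroup.mem_comap.2 (Subgroup.mem_zpowers _)
  exact hab (QuotientGroup.eq.2 (hKH ▸ hmem))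

end MaxAntichainSubgroup

theorem IsBIPO.exists_addHom_real_of_total {Q : Type*} [CommGroup Q] {r : Q → Q → Prop}
    (hr : IsBIPO r) (htot : ∀ a b : Q, a ≠ b → r a b ∨ r b a)
    (harch : ArchimedeanOrderFor r) :
    ∃ φ : Q → ℝ, (∀ a b, φ (a * b) = φ a + φ b) ∧ ∀ g h, r g h ↔ φ g < φ h := by
  classical
  have := hr.isStrictTotalOrder htot
  -- its `<` is `r` by definition, which the last line relies on
  let : LinearOrder Q := linearOrderOfSTO r
  have : IsOrderedMonoid Q := by
    refine ⟨fun a b hab c => ?_, fun a b hab c => ?_⟩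
    · rcases hab with rfl | hab
      exacts [le_rfl, Or.inr (hr.mul_right a b c hab)]
    · rcases hab with rfl | hab
      exacts [le_rfl, Or.inr (hr.mul_left a b c hab)]
  have : MulArchimedean Q := by
    refine ⟨fun x y hy => ?_⟩
    by_contra! hlt
    refine harch ⟨y, x, hy, fun i => (zpow_le_zpow_right hy.le Int.le_natAbs).trans_lt ?_⟩
    rw [zpow_natCast]
    exact hlt i.natAbs
  obtain ⟨f, hf⟩ := Archimedean.exists_orderAddMonoidHom_real_injective (Additive Q)
  exact ⟨fun q => f (Additive.ofMul q), fun a b => map_add f _ _,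
    fun g h => (f.monotone'.strictMono_of_injective hf).lt_iff_lt.symm⟩

theorem abelian_full_archimedean_induced_by_real_general {G : Type*} [CommGroup G]
    (r : G → G → Prop) (hr : IsBIPO r) (hfull : FullOrder r) (harch : ArchimedeanOrderFor r)
    (H : Subgroup G) (hH : IsMaxAntichainSubgroup r H) :
    (∃ r' : (G ⧸ H) → (G ⧸ H) → Prop, IsBIPO r' ∧
      (∀ a b : G ⧸ H, a ≠ b → r' a b ∨ r' b a) ∧
      ∀ g h : G, r g h ↔ r' (g : G ⧸ H) (h : G ⧸ H)) ∧
    ∃ Φ : G → ℝ, (∀ a b : G, Φ (a * b) = Φ a + Φ b) ∧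
      ∀ g h : G, r g h ↔ Φ g < Φ h := by
  obtain ⟨hprim, hfact⟩ := hfull
  obtain ⟨r', hr', hrr'⟩ := hfact H hH.1
  have htot := hH.total_of_factor hr hprim hrr'
  have harch' :=
    harch.of_surjective (QuotientGroup.mk' H) (QuotientGroup.mk'_surjective H) hrr'
  obtain ⟨φ, hφ_mul, hφ_lt⟩ := hr'.exists_addHom_real_of_total htot harch'
  exact ⟨⟨r', hr', htot, hrr'⟩, fun g => φ g, fun a b => hφ_mul a b,
    fun g h => (hrr' g h).trans (hφ_lt g h)⟩

/-- For a full archimedean order on a finitely generated abelian group with maximal antichain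
subgroup `H`, the quotient `G/H` carries a total order inducing `≺`, and `≺` is induced by a
homomorphism to `ℝ` with the standard order. -/
theorem abelian_full_archimedean_induced_by_real {G : Type*} [CommGroup G] [Group.FG G]
    (r : G → G → Prop) (hr : IsBIPO r) (hfull : FullOrder r) (harch : ArchimedeanOrderFor r)
    (H : Subgroup G) (hH : IsMaxAntichainSubgroup r H) :
    (∃ r' : (G ⧸ H) → (G ⧸ H) → Prop, IsBIPO r' ∧
      (∀ a b : G ⧸ H, a ≠ b → r' a b ∨ r' b a) ∧
      ∀ g h : G, r g h ↔ r' (g : G ⧸ H) (h : G ⧸ H)) ∧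
    ∃ Φ : G → ℝ, (∀ a b : G, Φ (a * b) = Φ a + Φ b) ∧
      ∀ g h : G, r g h ↔ Φ g < Φ h :=
  abelian_full_archimedean_induced_by_real_general r hr hfull harch H hH
end

section
/- Let G be a group, N ⊴ G a normal subgroup, and π : G → G/N the projection. A bi-invariant partial order ≺ on G arises as the pullback along π of some non-trivial full archimedean bi-invariant partial order ≺' on G/N (i.e. g ≺ h iff π(g) ≺' π(h)) if and only if ≺ is a non-trivial full archimedean bi-invariant partial order on G such that N is an antichain with respect to ≺. -/
/-- The order is archimedean: no positive infinitesimal elements. -/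
def ArchimedeanOrderRel {G : Type*} [Group G] (r : G → G → Prop) : Prop :=
  ¬ ∃ g h : G, r 1 g ∧ ∀ i : ℤ, r (g ^ i) h

/-!
Pulling an order back along a surjective homomorphism `φ : G →* Q` preserves and reflects
being non-trivial, primitive, archimedean and factorizing, since every element of `Q` lifts
through `φ`; for the factorizing property, normal antichains are transported by `map φ` and
`comap φ`, and `G ⧸ K.comap φ ≅ Q ⧸ K`. A pullback along `G → G ⧸ N` makes `N` an antichain,
and conversely a factorizing order for which `N` is an antichain is such a pullback.
-/

open Function

section Pullback

variable {G Q : Type*} [Group G] [Group Q] {r : Q → Q → Prop}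

theorem IsBIPO.comap (hr : IsBIPO r) (φ : G →* Q) : IsBIPO (r on φ) where
  irrefl g := hr.irrefl (φ g)
  antisymm g h := hr.antisymm (φ g) (φ h)
  trans f g h := hr.trans (φ f) (φ g) (φ h)
  mul_left f g h hfg := by simpa [onFun] using hr.mul_left (φ f) (φ g) (φ h) hfg
  mul_right f g h hfg := by simpa [onFun] using hr.mul_right (φ f) (φ g) (φ h) hfg

theorem isAntichainFor_of_le_ker (hr : IsBIPO r) (φ : G →* Q) {H : Subgroup G}
    (hH : H ≤ φ.ker) : IsAntichainFor (r on φ) (H : Set G) := by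
  intro s hs t ht hst
  rw [onFun, MonoidHom.mem_ker.1 (hH hs), MonoidHom.mem_ker.1 (hH ht)] at hst
  exact hr.irrefl 1 hst

variable {φ : G →* Q} (hφ : Surjective φ)
include hφ

theorem nontrivialOrder_comap_iff : NontrivialOrder (r on φ) ↔ NontrivialOrder r := by
  constructor
  · rintro ⟨g, h, hgh⟩
    exact ⟨φ g, φ h, hgh⟩
  · rintro ⟨a, b, hab⟩
    obtain ⟨g, rfl⟩ := hφ a
    obtain ⟨h, rfl⟩ := hφ b
    exact ⟨g, h, hab⟩

theorem primitiveOrder_comap_iff : PrimitiveOrder (r on φ) ↔ PrimitiveOrder r := by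
  constructor
  · intro hP a b n hn hab
    obtain ⟨g, rfl⟩ := hφ a
    obtain ⟨h, rfl⟩ := hφ b
    exact hP g h n hn (by simpa [onFun] using hab)
  · intro hP g h n hn hgh
    exact hP (φ g) (φ h) n hn (by simpa [onFun] using hgh)

theorem archimedeanOrderRel_comap_iff :
    ArchimedeanOrderRel (r on φ) ↔ ArchimedeanOrderRel r := by
  refine not_congr ⟨?_, ?_⟩
  · rintro ⟨g, h, hg, hinf⟩
    exact ⟨φ g, φ h, by simpa [onFun] using hg, fun i => by simpa [onFun] using hinf i⟩
  · rintro ⟨a, b, ha, hinf⟩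
    obtain ⟨g, rfl⟩ := hφ a
    obtain ⟨h, rfl⟩ := hφ b
    exact ⟨g, h, by simpa [onFun] using ha, fun i => by simpa [onFun] using hinf i⟩

theorem FactorizingOrder.comap (hF : FactorizingOrder r) : FactorizingOrder (r on φ) := by
  intro H _ hH
  have : (H.map φ).Normal := ‹H.Normal›.map φ hφ
  have hHφ : IsAntichainFor r (H.map φ : Set Q) := by
    rintro _ ⟨g, hg, rfl⟩ _ ⟨h, hh, rfl⟩
    exact hH g hg h hh
  obtain ⟨r', hr', hrr'⟩ := hF _ hHφ
  let ψ := QuotientGroup.map H (H.map φ) φ (H.le_comap_map φ)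
  exact ⟨r' on ψ, hr'.comap ψ, fun g h => hrr' (φ g) (φ h)⟩

noncomputable def quotientComapMulEquiv (K : Subgroup Q) [K.Normal] :
    G ⧸ K.comap φ ≃* Q ⧸ K :=
  MulEquiv.ofBijective (QuotientGroup.map (K.comap φ) K φ le_rfl) <| by
    refine ⟨(injective_iff_map_eq_one _).2 fun x hx => ?_,
      QuotientGroup.map_surjective_of_surjective _ _ _
        ((QuotientGroup.mk_surjective).comp hφ) _⟩
    induction x using QuotientGroup.induction_on with
    | H g =>
      rw [QuotientGroup.map_mk, QuotientGroup.eq_one_iff] at hx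
      exact (QuotientGroup.eq_one_iff g).2 hx

theorem quotientComapMulEquiv_symm_mk (K : Subgroup Q) [K.Normal] (g : G) :
    (quotientComapMulEquiv hφ K).symm (φ g : Q ⧸ K) = (g : G ⧸ K.comap φ) :=
  (MulEquiv.symm_apply_eq _).2 rfl

theorem FactorizingOrder.of_comap (hF : FactorizingOrder (r on φ)) : FactorizingOrder r := by
  intro K _ hK
  obtain ⟨r', hr', hrr'⟩ := hF (K.comap φ) fun g hg h hh => hK (φ g) hg (φ h) hh
  let e := quotientComapMulEquiv hφ K
  refine ⟨r' on e.symm, hr'.comap e.symm.toMonoidHom, fun a b => ?_⟩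
  obtain ⟨g, rfl⟩ := hφ a
  obtain ⟨h, rfl⟩ := hφ b
  simpa only [onFun, e, quotientComapMulEquiv_symm_mk] using hrr' g h

theorem fullOrder_comap_iff : FullOrder (r on φ) ↔ FullOrder r :=
  and_congr (primitiveOrder_comap_iff hφ) ⟨.of_comap hφ, .comap hφ⟩

end Pullback

/-- Characterisation of the relative order sphere: an order on `G` is the pullback along
`G → G/N` of a non-trivial full archimedean bi-invariant partial order on `G/N` iff it is
itself a non-trivial full archimedean bi-invariant partial order for which `N` is an
antichain. -/
theorem rel_order_sphere_characterisation {G : Type*} [Group G]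
    (N : Subgroup G) [N.Normal] (r : G → G → Prop) :
    (∃ r' : (G ⧸ N) → (G ⧸ N) → Prop, IsBIPO r' ∧ NontrivialOrder r' ∧
      FullOrder r' ∧ ArchimedeanOrderRel r' ∧
      ∀ g h : G, r g h ↔ r' (g : G ⧸ N) (h : G ⧸ N)) ↔
    (IsBIPO r ∧ NontrivialOrder r ∧ FullOrder r ∧ ArchimedeanOrderRel r ∧
      IsAntichainFor r (N : Set G)) := by
  have hπ := QuotientGroup.mk'_surjective N
  constructor
  · rintro ⟨r', hr', hNT, hFull, hA, hrr'⟩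
    obtain rfl : r = (r' on QuotientGroup.mk' N) := funext₂ fun g h => propext (hrr' g h)
    exact ⟨hr'.comap _, (nontrivialOrder_comap_iff hπ).2 hNT, (fullOrder_comap_iff hπ).2 hFull,
      (archimedeanOrderRel_comap_iff hπ).2 hA,
      isAntichainFor_of_le_ker hr' _ (QuotientGroup.ker_mk' N).ge⟩
  · rintro ⟨-, hNT, hFull, hA, hN⟩
    obtain ⟨r', hr', hrr'⟩ := hFull.2 N hN
    obtain rfl : r = (r' on QuotientGroup.mk' N) := funext₂ fun g h => propext (hrr' g h)
    exact ⟨r', hr', (nontrivialOrder_comap_iff hπ).1 hNT, (fullOrder_comap_iff hπ).1 hFull,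
      (archimedeanOrderRel_comap_iff hπ).1 hA, fun _ _ => Iff.rfl⟩
end

section
/- Let G be a finitely generated group, Q a finitely generated nilpotent group, and Φ : G → Q a surjective group homomorphism. Let P ⊴ Q be a normal subgroup, π : Q → Q/P the projection, and ≺ a bi-invariant partial order on Q/P whose positive cone is contained in the center Z(Q/P) and whose restriction to Z(Q/P) is total (any two distinct elements of Z(Q/P) are comparable). Set Ψ = π ∘ Φ : G → Q/P and H = Ψ⁻¹(Z(Q/P)) ≤ G, and equip G (respectively H) with the pullback order g ≺_G h iff Ψ(g) ≺ Ψ(h) (respectively its restriction to H). Then the following are equivalent: (a) for every normal subgroup K ⊴ G that is an antichain and is maximal among normal antichain subgroups of G, the set K_⪰ = {g ∈ G : g ∈ K or ∃ k ∈ K, k ≺_G g} is coarsely connected as a subset of G; (b) for every normal subgroup K ⊴ H that is an antichain and is maximal among normal antichain subgroups of H, the set K_⪰ = {g ∈ H : g ∈ K or ∃ k ∈ K, k ≺_G g} is coarsely connected as a subset of H. -/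
/-- The order is archimedean: no positive infinitesimal elements. -/
def ArchimedeanOrderOfGroup {G : Type*} [Group G] (r : G → G → Prop) : Prop :=
  ¬ ∃ g h : G, r 1 g ∧ ∀ i : ℤ, r (g ^ i) h

/-!
A normal antichain subgroup `K` of `G` maps onto a normal subgroup of the nilpotent group `Q/P`
with no positive element. A nontrivial normal subgroup of a nilpotent group meets the center,
and a nontrivial central element or its inverse is positive since the order is total there; so
`Ψ(K) = 1`. Hence `ker Ψ` is the unique maximal normal antichain subgroup of `G`, and likewise
`ker Ψ ∩ H` is the one of `H`, where `Ψ(H)` is central from the start. In both cases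
`K_⪰ = Ψ⁻¹({1} ∪ cone)`, which lies in `H` because the cone is central, and coarse connectedness
of a subset of `H` is the same whether it is viewed in `H` or in `G`.
-/

open Subgroup

open scoped commutatorElement in
theorem Subgroup.Normal.eq_bot_of_inf_center_eq_bot {G : Type*} [Group G] [Group.IsNilpotent G]
    {L : Subgroup G} (hL : L.Normal) (h : L ⊓ center G = ⊥) : L = ⊥ := by
  suffices ∀ n, L ⊓ upperCentralSeries G n = ⊥ by
    obtain ⟨n, hn⟩ := Group.IsNilpotent.nilpotent G
    simpa [hn] using this n
  intro n
  induction n with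
  | zero => simp
  | succ n ih =>
    refine eq_bot_iff.mpr fun g ⟨hgL, hg⟩ => h ▸ ⟨hgL, mem_center_iff.mpr fun y => ?_⟩
    have hcomm : (⁅g, y⁆ : G) ∈ L ⊓ upperCentralSeries G n :=
      mem_inf.mpr ⟨by simpa only [commutatorElement_def, mul_assoc]
          using L.mul_mem hgL (hL.conj_mem _ (L.inv_mem hgL) y),
        mem_upperCentralSeries_succ_iff.mp hg y⟩
    rw [ih, mem_bot, commutatorElement_eq_one_iff_mul_comm] at hcomm
    exact hcomm.symm

theorem forall_maximal_imp_iff_of_greatest {α : Type*} [PartialOrder α] {p q P : α → Prop}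
    {a : α} (hpa : p a) (hqa : q a) (hle : ∀ b, p b → q b → b ≤ a) :
    (∀ b, p b → q b → (∀ c, p c → q c → b ≤ c → c = b) → P b) ↔ P a :=
  ⟨fun h => h a hpa hqa fun c hpc hqc hac => (hle c hpc hqc).antisymm hac,
    fun h b hpb hqb hmax => hmax a hpa hqa (hle b hpb hqb) ▸ h⟩

section PulledBackOrder

variable {X G : Type*} [Group X] [Group G] {r : X → X → Prop}

theorem IsBIPO.rel_iff_one_rel_inv_mul (hr : IsBIPO r) (a b : X) : r a b ↔ r 1 (a⁻¹ * b) :=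
  ⟨fun h => by simpa using hr.mul_left _ _ a⁻¹ h, fun h => by simpa using hr.mul_left _ _ a h⟩

theorem isAntichainFor_preimage_iff (hr : IsBIPO r) (f : G →* X) (K : Subgroup G) :
    IsAntichainFor (f ⁻¹'o r) (K : Set G) ↔ ∀ k ∈ K, ¬ r 1 (f k) := by
  refine ⟨fun h k hk hpos => h 1 K.one_mem k hk (by simpa [Order.Preimage] using hpos),
    fun h s hs t ht hst => h (s⁻¹ * t) (K.mul_mem (K.inv_mem hs) ht) ?_⟩
  simpa [hr.rel_iff_one_rel_inv_mul] using hst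

theorem isAntichainFor_preimage_ker (hr : IsBIPO r) (f : G →* X) :
    IsAntichainFor (f ⁻¹'o r) (f.ker : Set G) :=
  (isAntichainFor_preimage_iff hr f _).mpr fun k hk => by
    rw [MonoidHom.mem_ker.mp hk]
    exact hr.irrefl 1

theorem setOf_mem_ker_or_rel_eq_preimage (f : G →* X) :
    {g : G | g ∈ f.ker ∨ ∃ k ∈ (f.ker : Set G), (f ⁻¹'o r) k g} =
      f ⁻¹' insert 1 (posCone r) := by
  ext g
  simp only [Set.mem_ofPred_eq, SetLike.mem_coe, MonoidHom.mem_ker, Order.Preimage,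
    Set.mem_preimage, Set.mem_insert_iff, posCone]
  exact or_congr_right
    ⟨fun ⟨k, hk, hkg⟩ => hk ▸ hkg, fun h => ⟨1, map_one f, by rwa [map_one]⟩⟩

variable (htot : ∀ a b : X, a ∈ center X → b ∈ center X → a ≠ b → r a b ∨ r b a)
include htot

theorem IsBIPO.inf_center_eq_bot (hr : IsBIPO r) {L : Subgroup X} (hL : ∀ l ∈ L, ¬ r 1 l) :
    L ⊓ center X = ⊥ := by
  refine eq_bot_iff.mpr fun z ⟨hzL, hz⟩ => mem_bot.mpr (by_contra fun hne => ?_)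
  rcases htot 1 z (one_mem _) hz (Ne.symm hne) with hpos | hneg
  · exact hL z hzL hpos
  · exact hL z⁻¹ (L.inv_mem hzL) (by simpa using hr.mul_right _ _ z⁻¹ hneg)

theorem le_ker_of_isAntichainFor_of_normal [Group.IsNilpotent X] (hr : IsBIPO r) {f : G →* X}
    (hf : Function.Surjective f) {K : Subgroup G} (hK : K.Normal)
    (hKa : IsAntichainFor (f ⁻¹'o r) (K : Set G)) : K ≤ f.ker := by
  refine (Subgroup.map_eq_bot_iff K).mp <|
    (hK.map f hf).eq_bot_of_inf_center_eq_bot (hr.inf_center_eq_bot htot ?_)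
  rintro _ ⟨k, hk, rfl⟩
  exact (isAntichainFor_preimage_iff hr f K).mp hKa k hk

theorem le_ker_of_isAntichainFor_of_range_le_center (hr : IsBIPO r) {f : G →* X}
    (hf : f.range ≤ center X) {K : Subgroup G}
    (hKa : IsAntichainFor (f ⁻¹'o r) (K : Set G)) : K ≤ f.ker := by
  have := hr.inf_center_eq_bot htot (L := K.map f) <| by
    rintro _ ⟨k, hk, rfl⟩
    exact (isAntichainFor_preimage_iff hr f K).mp hKa k hk
  rwa [inf_eq_left.mpr ((map_le_range f K).trans hf), Subgroup.map_eq_bot_iff] at this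

end PulledBackOrder

section Chains

variable {G G' : Type*} [Group G] [Group G']

def ChainConnected (S K : Set G) : Prop :=
  ∀ g ∈ K, ∀ h ∈ K, ∃ (n : ℕ) (c : ℕ → G),
    c 0 = g ∧ c n = h ∧ (∀ i ≤ n, c i ∈ K) ∧ ∀ i < n, (c i)⁻¹ * c (i + 1) ∈ S ∪ S⁻¹

theorem ChainConnected.mono {S T K : Set G} (h : ChainConnected S K) (hST : S ⊆ T) :
    ChainConnected T K := fun g hg g' hg' => by
  obtain ⟨n, c, hc0, hcn, hmem, hstep⟩ := h g hg g' hg'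
  exact ⟨n, c, hc0, hcn, hmem, fun i hi =>
    Set.union_subset_union hST (Set.inv_subset_inv.mpr hST) (hstep i hi)⟩

theorem ChainConnected.inv_mul_mem_closure {S K : Set G} (h : ChainConnected S K) {g g' : G}
    (hg : g ∈ K) (hg' : g' ∈ K) : g⁻¹ * g' ∈ closure S := by
  obtain ⟨n, c, rfl, rfl, -, hstep⟩ := h g hg g' hg'
  suffices ∀ i ≤ n, (c 0)⁻¹ * c i ∈ closure S from this n le_rfl
  intro i
  induction i with
  | zero => simp
  | succ i ih =>
    intro hi
    have hs : (c i)⁻¹ * c (i + 1) ∈ closure S := by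
      rcases hstep i hi with hs | hs
      · exact subset_closure hs
      · exact inv_mem_iff.mp (subset_closure hs)
    simpa [mul_assoc] using mul_mem (ih (Nat.le_of_succ_le hi)) hs

theorem ChainConnected.image {S K : Set G} (h : ChainConnected S K) (f : G →* G') :
    ChainConnected (f '' S) (f '' K) := by
  rintro _ ⟨g, hg, rfl⟩ _ ⟨g', hg', rfl⟩
  obtain ⟨n, c, hc0, hcn, hmem, hstep⟩ := h g hg g' hg'
  refine ⟨n, f ∘ c, by simp [hc0], by simp [hcn], fun i hi => ⟨c i, hmem i hi, rfl⟩,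
    fun i hi => ?_⟩
  rcases hstep i hi with hs | hs
  · exact Or.inl ⟨_, hs, by simp⟩
  · exact Or.inr ⟨_, hs, by simp⟩

theorem ChainConnected.preimage_subtype {S A : Set G} {H : Subgroup G} (h : ChainConnected S A)
    (hA : A ⊆ H) : ChainConnected (((↑) : H → G) ⁻¹' S) ((↑) ⁻¹' A) := by
  intro x hx y hy
  obtain ⟨n, c, hc0, hcn, hmem, hstep⟩ := h x hx y hy
  -- the chain is only known to lie in `H` up to its length `n`
  have hcH : ∀ i, c (min i n) ∈ H := fun i => hA (hmem _ (min_le_right i n))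
  refine ⟨n, fun i => ⟨c (min i n), hcH i⟩, by ext; simpa using hc0, by ext; simpa using hcn,
    fun i hi => hmem _ (min_le_right i n), fun i hi => ?_⟩
  simpa [min_eq_left hi.le, min_eq_left (Nat.succ_le_of_lt hi)] using hstep i hi

theorem coarselyConnected_iff {K : Set G} :
    CoarselyConnected K ↔ ∃ S : Set G, S.Finite ∧ ChainConnected S K := by
  refine ⟨fun ⟨_, S, _, _, h⟩ => ⟨S, S.finite_toSet, h⟩, fun ⟨S, hS, h⟩ => ?_⟩
  rcases K.eq_empty_or_nonempty with rfl | ⟨g₀, hg₀⟩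
  · exact ⟨⊥, ∅, Set.empty_subset _, by simp, by simp⟩
  -- adding a base point of `K` to the steps makes `K` lie in the subgroup they generate
  have hT : (insert g₀ S).Finite := hS.insert g₀
  refine ⟨closure (insert g₀ S), hT.toFinset, fun g hg => ?_, by rw [hT.coe_toFinset],
    by rw [hT.coe_toFinset]; exact h.mono (Set.subset_insert g₀ S)⟩
  have hmem : g₀⁻¹ * g ∈ closure (insert g₀ S) :=
    closure_mono (Set.subset_insert g₀ S) (h.inv_mul_mem_closure hg₀ hg)
  simpa using mul_mem (subset_closure (Set.mem_insert g₀ S)) hmem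

theorem coarselyConnected_preimage_subtype_iff {H : Subgroup G} {A : Set G} (hA : A ⊆ H) :
    CoarselyConnected (((↑) : H → G) ⁻¹' A) ↔ CoarselyConnected A := by
  simp only [coarselyConnected_iff]
  refine ⟨fun ⟨T, hT, h⟩ => ⟨(↑) '' T, hT.image _, ?_⟩,
    fun ⟨S, hS, h⟩ => ⟨_, hS.preimage Subtype.val_injective.injOn, h.preimage_subtype hA⟩⟩
  have hA' : ((↑) : H → G) '' ((↑) ⁻¹' A) = A :=
    Set.image_preimage_eq_of_subset (by simpa using hA)
  simpa [hA'] using h.image H.subtype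

end Chains

theorem bns_pass_to_subgroup_general {G Q : Type*} [Group G] [Group Q]
    [Group.IsNilpotent Q]
    (Φ : G →* Q) (hΦ : Function.Surjective Φ)
    (P : Subgroup Q) [P.Normal]
    (r : (Q ⧸ P) → (Q ⧸ P) → Prop) (hr : IsBIPO r)
    (hcone : ∀ q : Q ⧸ P, r 1 q → q ∈ Subgroup.center (Q ⧸ P))
    (htot : ∀ a b : Q ⧸ P, a ∈ Subgroup.center (Q ⧸ P) → b ∈ Subgroup.center (Q ⧸ P) →
      a ≠ b → r a b ∨ r b a)
    (Ψ : G →* Q ⧸ P) (hΨ : Ψ = (QuotientGroup.mk' P).comp Φ)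
    (H : Subgroup G) (hH : H = (Subgroup.center (Q ⧸ P)).comap Ψ)
    (rG : G → G → Prop) (hrG : ∀ g h : G, rG g h ↔ r (Ψ g) (Ψ h))
    (rH : ↥H → ↥H → Prop) (hrH : ∀ x y : ↥H, rH x y ↔ rG ↑x ↑y) :
    (∀ K : Subgroup G, K.Normal → IsAntichainFor rG (K : Set G) →
        (∀ K' : Subgroup G, K'.Normal → IsAntichainFor rG (K' : Set G) → K ≤ K' → K' = K) →
        CoarselyConnected {g : G | g ∈ K ∨ ∃ k ∈ (K : Set G), rG k g}) ↔
    (∀ K : Subgroup ↥H, K.Normal → IsAntichainFor rH (K : Set ↥H) →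
        (∀ K' : Subgroup ↥H, K'.Normal → IsAntichainFor rH (K' : Set ↥H) → K ≤ K' → K' = K) →
        CoarselyConnected {x : ↥H | x ∈ K ∨ ∃ k ∈ (K : Set ↥H), rH k x}) := by
  obtain rfl : rG = Ψ ⁻¹'o r := funext₂ fun g h => propext (hrG g h)
  obtain rfl : rH = (Ψ.comp H.subtype) ⁻¹'o r := funext₂ fun x y => propext (hrH x y)
  have hΨ_surj : Function.Surjective Ψ := hΨ ▸ (QuotientGroup.mk'_surjective P).comp hΦ
  have hΨH : (Ψ.comp H.subtype).range ≤ center (Q ⧸ P) := by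
    rintro _ ⟨x, rfl⟩
    simpa [hH] using x.2
  have hA : Ψ ⁻¹' insert 1 (posCone r) ⊆ H := by
    rintro g (hg | hg)
    · simp [hH, hg, one_mem]
    · exact hH ▸ hcone _ hg
  rw [forall_maximal_imp_iff_of_greatest Ψ.normal_ker (isAntichainFor_preimage_ker hr Ψ)
      fun K hK hKa => le_ker_of_isAntichainFor_of_normal htot hr hΨ_surj hK hKa,
    forall_maximal_imp_iff_of_greatest (MonoidHom.normal_ker _) (isAntichainFor_preimage_ker hr _)
      fun K _ hKa => le_ker_of_isAntichainFor_of_range_le_center htot hr hΨH hKa,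
    setOf_mem_ker_or_rel_eq_preimage, setOf_mem_ker_or_rel_eq_preimage,
    ← coarselyConnected_preimage_subtype_iff hA]
  rfl

/-- Passing the Σ-condition to the subgroup `H = Ψ⁻¹(Z(Q/P))`: for the pullback order on `G`
of an order on `Q/P` whose positive cone lies in the center and is total there, the coarse
connectedness condition on maximal normal antichain subgroups holds in `G` iff it holds
in `H`. -/
theorem bns_pass_to_subgroup {G Q : Type*} [Group G] [Group Q] [Group.FG G] [Group.FG Q]
    [Group.IsNilpotent Q]
    (Φ : G →* Q) (hΦ : Function.Surjective Φ)
    (P : Subgroup Q) [P.Normal]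
    (r : (Q ⧸ P) → (Q ⧸ P) → Prop) (hr : IsBIPO r)
    (hcone : ∀ q : Q ⧸ P, r 1 q → q ∈ Subgroup.center (Q ⧸ P))
    (htot : ∀ a b : Q ⧸ P, a ∈ Subgroup.center (Q ⧸ P) → b ∈ Subgroup.center (Q ⧸ P) →
      a ≠ b → r a b ∨ r b a)
    (Ψ : G →* Q ⧸ P) (hΨ : Ψ = (QuotientGroup.mk' P).comp Φ)
    (H : Subgroup G) (hH : H = (Subgroup.center (Q ⧸ P)).comap Ψ)
    (rG : G → G → Prop) (hrG : ∀ g h : G, rG g h ↔ r (Ψ g) (Ψ h))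
    (rH : ↥H → ↥H → Prop) (hrH : ∀ x y : ↥H, rH x y ↔ rG ↑x ↑y) :
    (∀ K : Subgroup G, K.Normal → IsAntichainFor rG (K : Set G) →
        (∀ K' : Subgroup G, K'.Normal → IsAntichainFor rG (K' : Set G) → K ≤ K' → K' = K) →
        CoarselyConnected {g : G | g ∈ K ∨ ∃ k ∈ (K : Set G), rG k g}) ↔
    (∀ K : Subgroup ↥H, K.Normal → IsAntichainFor rH (K : Set ↥H) →
        (∀ K' : Subgroup ↥H, K'.Normal → IsAntichainFor rH (K' : Set ↥H) → K ≤ K' → K' = K) →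
        CoarselyConnected {x : ↥H | x ∈ K ∨ ∃ k ∈ (K : Set ↥H), rH k x}) :=
  bns_pass_to_subgroup_general Φ hΦ P r hr hcone htot Ψ hΨ H hH rG hrG rH hrH
end
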